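/- Let F be a class of functions from [0,1] to [0,1] with total variation at most V, and let γ > 0. Suppose n ≥ 2 and x_1 < x_2 < ... < x_n is γ-shattered by F with witnesses s_1, ..., s_n. Then there exist f, g ∈ F with Σ_{t=1}^{n−1}(|f(x_{t+1}) − f(x_t)| + |g(x_{t+1}) − g(x_t)|) ≥ 2γ(n−1), hence 2V ≥ 2γ(n−1) and n ≤ 1 + V/γ. -/
import Mathlib


/-- `f` has total variation at most `V` on `[0,1]`. -/
def TVBound (f : ℝ → ℝ) (V : ℝ) : Prop :=
  ∀ (k : ℕ) (t : Fin (k + 1) → ℝ), Monotone t → (∀ i, t i ∈ Set.Icc (0 : ℝ) 1) →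
    ∑ i : Fin k, |f (t i.succ) - f (t i.castSucc)| ≤ V

/-- The class of functions from `[0,1]` to `[0,1]` of total variation at most `V`. -/
def Fbv (V : ℝ) : Set (ℝ → ℝ) :=
  {f | (∀ x ∈ Set.Icc (0 : ℝ) 1, f x ∈ Set.Icc (0 : ℝ) 1) ∧ TVBound f V}

/-- If `n ≥ 2` and the increasing sequence `x_1 < ... < x_n` in `[0,1]` is `γ`-shattered
(with witnesses `s`) by the class of `[0,1]`-valued functions with total variation at most
`V`, then there are `f, g` in the class whose combined oscillation along consecutive points
is at least `2γ(n-1)`; hence `n ≤ 1 + V/γ`. -/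
theorem stmt_19 (V γ : ℝ) (hγ : 0 < γ) (n : ℕ) (hn : 2 ≤ n) (x : Fin n → ℝ)
    (hmono : StrictMono x) (hx : ∀ i, x i ∈ Set.Icc (0 : ℝ) 1) (s : Fin n → ℝ)
    (hshat : ∀ ε : Fin n → ℤˣ, ∃ f ∈ Fbv V, ∀ t : Fin n,
      ((ε t : ℤ) : ℝ) * (f (x t) - s t) ≥ γ) :
    (∃ f ∈ Fbv V, ∃ g ∈ Fbv V,
      ∑ t : Fin (n - 1),
        (|f (x ⟨t.1 + 1, by omega⟩) - f (x ⟨t.1, by omega⟩)| +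
         |g (x ⟨t.1 + 1, by omega⟩) - g (x ⟨t.1, by omega⟩)|)
        ≥ 2 * γ * (n - 1)) ∧
    (n : ℝ) ≤ 1 + V / γ := by
  set ε : Fin n → ℤˣ := fun t => (-1) ^ t.1 with hεdef
  obtain ⟨f, hf, hfs⟩ := hshat ε
  obtain ⟨g, hg, hgs⟩ := hshat (fun t => -(ε t))
  -- real-valued sign
  have hev : ∀ t : Fin n, ((ε t : ℤ) : ℝ) = (-1 : ℝ) ^ t.1 := by
    intro t; simp [hεdef]
  -- per-step lower bound
  have key : ∀ t : Fin (n - 1), 2 * γ ≤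
      |f (x ⟨t.1 + 1, by omega⟩) - f (x ⟨t.1, by omega⟩)| +
      |g (x ⟨t.1 + 1, by omega⟩) - g (x ⟨t.1, by omega⟩)| := by
    intro t
    have ht1 : t.1 < n := by omega
    have ht2 : t.1 + 1 < n := by omega
    set a : Fin n := ⟨t.1, ht1⟩
    set b : Fin n := ⟨t.1 + 1, ht2⟩
    have hfa := hfs a
    have hfb := hfs b
    have hga := hgs a
    have hgb := hgs b
    have hea : ((ε a : ℤ) : ℝ) = (-1 : ℝ) ^ t.1 := hev a
    have heb : ((ε b : ℤ) : ℝ) = -(-1 : ℝ) ^ t.1 := by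
      rw [hev b]; ring
    simp only [Units.val_neg, Int.cast_neg] at hga hgb
    rw [hea] at hfa hga
    rw [heb] at hfb hgb
    have hΔ : 4 * γ ≤ |(f (x b) - g (x b)) - (f (x a) - g (x a))| := by
      rcases Nat.even_or_odd t.1 with h | h
      · have hp : ((-1 : ℝ)) ^ t.1 = 1 := h.neg_one_pow
        rw [hp] at hfa hfb hga hgb
        have : (f (x a) - g (x a)) - (f (x b) - g (x b)) ≥ 4 * γ := by nlinarith
        rw [abs_sub_comm]
        calc 4 * γ ≤ (f (x a) - g (x a)) - (f (x b) - g (x b)) := this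
          _ ≤ |(f (x a) - g (x a)) - (f (x b) - g (x b))| := le_abs_self _
      · have hp : ((-1 : ℝ)) ^ t.1 = -1 := h.neg_one_pow
        rw [hp] at hfa hfb hga hgb
        have : (f (x b) - g (x b)) - (f (x a) - g (x a)) ≥ 4 * γ := by nlinarith
        calc 4 * γ ≤ (f (x b) - g (x b)) - (f (x a) - g (x a)) := this
          _ ≤ |(f (x b) - g (x b)) - (f (x a) - g (x a))| := le_abs_self _
    have htri : |(f (x b) - g (x b)) - (f (x a) - g (x a))| ≤
        |f (x b) - f (x a)| + |g (x b) - g (x a)| := by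
      have : (f (x b) - g (x b)) - (f (x a) - g (x a)) =
          (f (x b) - f (x a)) - (g (x b) - g (x a)) := by ring
      rw [this]
      exact (abs_sub _ _)
    have : 2 * γ ≤ |f (x b) - f (x a)| + |g (x b) - g (x a)| := by linarith
    exact this
  -- the sum bound
  have hcast : ((n - 1 : ℕ) : ℝ) = (n : ℝ) - 1 := by
    rw [Nat.cast_sub (by omega)]; norm_num
  have hsum : 2 * γ * ((n : ℝ) - 1) ≤
      ∑ t : Fin (n - 1),
        (|f (x ⟨t.1 + 1, by omega⟩) - f (x ⟨t.1, by omega⟩)| +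
         |g (x ⟨t.1 + 1, by omega⟩) - g (x ⟨t.1, by omega⟩)|) := by
    have := Finset.sum_le_sum (fun t (_ : t ∈ Finset.univ) => key t)
    simpa [Finset.sum_const, Finset.card_univ, nsmul_eq_mul, hcast, mul_comm] using this
  refine ⟨⟨f, hf, g, hg, hsum⟩, ?_⟩
  -- TV bounds
  have hmono' : Monotone (fun i : Fin ((n - 1) + 1) => x ⟨i.1, by omega⟩) := by
    intro i j hij
    exact hmono.monotone (by exact hij)
  have hx' : ∀ i : Fin ((n - 1) + 1), x ⟨i.1, by omega⟩ ∈ Set.Icc (0 : ℝ) 1 :=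
    fun i => hx _
  have hfV : ∑ t : Fin (n - 1),
      |f (x ⟨t.1 + 1, by omega⟩) - f (x ⟨t.1, by omega⟩)| ≤ V :=
    hf.2 (n - 1) (fun i => x ⟨i.1, by omega⟩) hmono' hx'
  have hgV : ∑ t : Fin (n - 1),
      |g (x ⟨t.1 + 1, by omega⟩) - g (x ⟨t.1, by omega⟩)| ≤ V :=
    hg.2 (n - 1) (fun i => x ⟨i.1, by omega⟩) hmono' hx'
  have hsplit : (∑ t : Fin (n - 1),
        (|f (x ⟨t.1 + 1, by omega⟩) - f (x ⟨t.1, by omega⟩)| +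
         |g (x ⟨t.1 + 1, by omega⟩) - g (x ⟨t.1, by omega⟩)|)) ≤ 2 * V := by
    rw [Finset.sum_add_distrib]; linarith
  have hfin : 2 * γ * ((n : ℝ) - 1) ≤ 2 * V := le_trans hsum hsplit
  have h1 : (n : ℝ) - 1 ≤ V / γ := by
    rw [le_div_iff₀ hγ]; nlinarith
  linarith
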